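/- There is no acyclic orientation of C_n^2 (n ≥ 7) whose set of dependent arcs has exactly ⌈n/2⌉ elements and whose underlying edge set makes C_n^2 triangle-free upon deletion. -/

import Mathlib

open SimpleGraph

variable {V : Type*}

/-- An orientation of a simple graph: each edge gets exactly one direction. -/
structure GraphOrientation {V : Type*} (G : SimpleGraph V) where
  rel : V → V → Prop
  sub : ∀ ⦃u v⦄, rel u v → G.Adj u v
  cover : ∀ ⦃u v⦄, G.Adj u v → rel u v ∨ rel v u
  asymm : ∀ ⦃u v⦄, rel u v → ¬ rel v u

/-- An orientation is acyclic if it has no directed cycle. -/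
def GraphOrientation.Acyclic {G : SimpleGraph V} (D : GraphOrientation G) : Prop :=
  ∀ v, ¬ Relation.TransGen D.rel v v

/-- An arc `u → v` of an acyclic orientation is dependent iff its reversal creates a
directed cycle, equivalently there is another directed path from `u` to `v`. -/
def GraphOrientation.Dep {G : SimpleGraph V} (D : GraphOrientation G) (u v : V) : Prop :=
  D.rel u v ∧ Relation.TransGen (fun a b => D.rel a b ∧ ¬(a = u ∧ b = v)) u v

/-- The set of dependent arcs of an orientation. -/
def GraphOrientation.depArcs {G : SimpleGraph V} (D : GraphOrientation G) : Set (V × V) :=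
  {p | D.Dep p.1 p.2}

/-- The number of dependent arcs. -/
noncomputable def depCount {G : SimpleGraph V} (D : GraphOrientation G) : ℕ :=
  D.depArcs.ncard

/-- Minimum number of dependent arcs over all acyclic orientations. -/
noncomputable def dmin (G : SimpleGraph V) : ℕ :=
  sInf {k | ∃ D : GraphOrientation G, D.Acyclic ∧ depCount D = k}

/-- Maximum number of dependent arcs over all acyclic orientations. -/
noncomputable def dmax (G : SimpleGraph V) : ℕ :=
  sSup {k | ∃ D : GraphOrientation G, D.Acyclic ∧ depCount D = k}

/-- Minimum number of edges whose deletion makes `G` triangle-free. -/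
noncomputable def piT (G : SimpleGraph V) : ℕ :=
  sInf {k | ∃ S : Set (Sym2 V), S ⊆ G.edgeSet ∧ S.ncard = k ∧ (G.deleteEdges S).CliqueFree 3}

/-- The square of the cycle `C_n` on vertices `ZMod n`. -/
def cycleSq (n : ℕ) : SimpleGraph (ZMod n) where
  Adj u v := u ≠ v ∧ (u - v = 1 ∨ v - u = 1 ∨ u - v = 2 ∨ v - u = 2)
  symm := ⟨fun u v h => ⟨h.1.symm, by tauto⟩⟩
  loopless := ⟨fun u h => h.1 rfl⟩


/-!
Let `f` be a height function of the acyclic orientation (strictly increasing along arcs). In every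
triangle the edge joining its `f`-lowest and `f`-highest vertices is dependent, the two other arcs
forming a second directed path. So the set `S` of dependent edges meets every triangle
`T i = {i, i + 1, i + 2}`, and since `|S| ≤ ⌈n/2⌉`, counting incidences between `S` and these
triangles shows that all of them but one, `T p`, meet `S` in a single short edge.

Suppose the short edge `{x, x + 1}` is dependent, oriented `x → x + 1`, and `T x`, `T (x + 1)` each
meet `S` in a single short edge. These are then `{x, x + 1}` and `{x + 2, x + 3}`, with middle
vertices `x + 2` and `x + 1`, which forces `x → x + 2 → x + 1 → x + 3`: the chain of dependent
short edges continues at `{x + 2, x + 3}`, oriented the same way, and `f` increases along it.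
Reversing every arc keeps `S`, so the first arc of a chain may be oriented either way, and at its
`f`-maximal point the chain must run into `T p`. If every triangle is hit once this is impossible.
If `T p` contains no short edge of `S`, the chain from `p + 2` ends at `p - 1`, and the path
`p + 2 → ⋯ → p - 1 → p + 1` makes the arc `p + 2 → p + 1` dependent. If `T p` contains both, the
chain from `p + 1` ends at `p`, and `p → p + 1 → p + 2` makes the long edge `{p, p + 2}` dependent
too, which exceeds the weight available for `T p`.
-/

open Relation

theorem ZMod.natCast_ne_zero_of_lt {n k : ℕ} (hk : k ≠ 0) (hkn : k < n) : (k : ZMod n) ≠ 0 := by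
  rw [Ne, ZMod.natCast_eq_zero_iff]
  exact Nat.not_dvd_of_pos_of_lt (Nat.pos_of_ne_zero hk) hkn

theorem Fintype.exists_forall_ne_eq_one {ι : Type*} [Fintype ι] [Nonempty ι] (w : ι → ℕ)
    (hw : ∀ i, 1 ≤ w i) (hsum : ∑ i, w i ≤ Fintype.card ι + 1) :
    ∃ p, w p ≤ 2 ∧ ∀ i ≠ p, w i = 1 := by
  classical
  obtain ⟨p, hp⟩ := Finite.exists_max w
  have hexcess : ∑ i, (w i - 1) ≤ 1 := by
    have : ∑ i, (w i - 1) + Fintype.card ι = ∑ i, w i := by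
      rw [Fintype.card_eq_sum_ones, ← Finset.sum_add_distrib]
      exact Finset.sum_congr rfl fun i _ => Nat.sub_add_cancel (hw i)
    omega
  refine ⟨p, ?_, fun i hi => ?_⟩
  · have := Finset.single_le_sum (f := fun i => w i - 1) (fun i _ => Nat.zero_le _)
      (Finset.mem_univ p)
    omega
  · have := Finset.sum_le_sum_of_subset (f := fun i => w i - 1) (Finset.subset_univ {i, p})
    rw [Finset.sum_pair hi] at this
    have := hp i
    have := hw i
    omega

namespace GraphOrientation

variable {G : SimpleGraph V} (D : GraphOrientation G)

def reverse : GraphOrientation G where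
  rel u v := D.rel v u
  sub _ _ h := (D.sub h).symm
  cover _ _ h := (D.cover h).symm
  asymm _ _ h := D.asymm h

def depEdges : Set (Sym2 V) := {e | ∃ u v, D.Dep u v ∧ e = s(u, v)}

variable {D} {u v a b c : V}

theorem Acyclic.reverse (hD : D.Acyclic) : D.reverse.Acyclic :=
  fun v h => hD v (transGen_swap.mp h)

theorem dep_reverse : D.reverse.Dep u v ↔ D.Dep v u := by
  refine and_congr_right fun _ => ?_
  rw [← transGen_swap]
  refine Eq.to_iff (congrArg (TransGen · v u) ?_)
  ext a b
  simp only [Function.swap, reverse, and_comm (a := b = u)]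

theorem depEdges_reverse : D.reverse.depEdges = D.depEdges := by
  ext e
  constructor <;> rintro ⟨u, v, h, rfl⟩
  · exact ⟨v, u, dep_reverse.mp h, Sym2.eq_swap⟩
  · exact ⟨v, u, dep_reverse.mpr h, Sym2.eq_swap⟩

theorem Acyclic.exists_reorient (hD : D.Acyclic) (h : G.Adj u v) :
    ∃ D' : GraphOrientation G, D'.Acyclic ∧ D'.depEdges = D.depEdges ∧ D'.rel u v :=
  (D.cover h).elim (fun h => ⟨D, hD, rfl, h⟩)
    fun h => ⟨D.reverse, hD.reverse, depEdges_reverse, h⟩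

theorem ncard_depEdges_le [Finite V] : D.depEdges.ncard ≤ D.depArcs.ncard := by
  have : D.depEdges = (fun p : V × V => s(p.1, p.2)) '' D.depArcs := by
    ext e
    simp [depEdges, depArcs, eq_comm]
  rw [this]
  exact Set.ncard_image_le (Set.toFinite _)

theorem Acyclic.exists_height [Finite V] (hD : D.Acyclic) :
    ∃ f : V → ℕ, ∀ ⦃u v⦄, D.rel u v → f u < f v :=
  ⟨fun v => {u | TransGen D.rel u v}.ncard, fun u _ h => Set.ncard_lt_ncard <|
    (Set.ssubset_iff_of_subset fun _ hx => TransGen.tail hx h).mpr ⟨u, .single h, hD u⟩⟩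

theorem rel_of_lt {f : V → ℕ} (hf : ∀ ⦃u v⦄, D.rel u v → f u < f v) (h : G.Adj u v)
    (hlt : f u < f v) : D.rel u v :=
  (D.cover h).resolve_right fun h' => lt_asymm (hf h') hlt

theorem Acyclic.dep_of_transGen (hD : D.Acyclic) (hab : TransGen D.rel a b) (hbc : D.rel b c)
    (hac : D.rel a c) : D.Dep a c := by
  refine ⟨hac, ?_⟩
  have avoid : ∀ x, TransGen D.rel x b →
      TransGen (fun x y => D.rel x y ∧ ¬(x = a ∧ y = c)) x b := by
    intro x hx
    induction hx using TransGen.head_induction_on with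
    | single h => exact .single ⟨h, fun ⟨_, hb⟩ => D.asymm hbc (hb ▸ hbc)⟩
    | head h hzb ih => exact .head ⟨h, fun ⟨_, hz⟩ => hD _ (hz ▸ hzb.tail hbc)⟩ ih
  exact (avoid a hab).tail ⟨hbc, fun ⟨hb, _⟩ => hD a (hb ▸ hab)⟩

theorem Acyclic.mk_mem_depEdges_of_rel (hD : D.Acyclic) (hab : D.rel a b) (hbc : D.rel b c)
    (hac : G.Adj a c) : s(a, c) ∈ D.depEdges :=
  ⟨a, c, hD.dep_of_transGen (.single hab) hbc <|
    (D.cover hac).resolve_right fun hca => hD a (.tail (.tail (.single hab) hbc) hca), rfl⟩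

variable {f : V → ℕ}

theorem Acyclic.mk_mem_depEdges_of_mem_uIoo (hD : D.Acyclic)
    (hf : ∀ ⦃u v⦄, D.rel u v → f u < f v) (hab : G.Adj a b) (hbc : G.Adj b c) (hac : G.Adj a c)
    (h : f b ∈ Set.uIoo (f a) (f c)) : s(a, c) ∈ D.depEdges := by
  simp only [Set.uIoo, Set.mem_Ioo] at h
  rcases le_total (f a) (f c) with hle | hle
  · exact hD.mk_mem_depEdges_of_rel (rel_of_lt hf hab (by omega))
      (rel_of_lt hf hbc (by omega)) hac
  · rw [Sym2.eq_swap]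
    exact hD.mk_mem_depEdges_of_rel (rel_of_lt hf hbc.symm (by omega))
      (rel_of_lt hf hab.symm (by omega)) hac.symm

theorem Acyclic.mem_uIoo_of_notMem_depEdges (hD : D.Acyclic)
    (hf : ∀ ⦃u v⦄, D.rel u v → f u < f v) (hab : G.Adj a b) (hbc : G.Adj b c)
    (hac : G.Adj a c) (h₁ : s(a, b) ∉ D.depEdges) (h₂ : s(b, c) ∉ D.depEdges) :
    f b ∈ Set.uIoo (f a) (f c) := by
  have hne : ∀ ⦃x y⦄, G.Adj x y → f x ≠ f y := fun x y h =>
    (D.cover h).elim (fun h => (hf h).ne) fun h => (hf h).ne'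
  have := hne hab
  have := hne hbc
  have := hne hac
  by_contra hb
  by_cases ha : f a ∈ Set.uIoo (f b) (f c)
  · exact h₂ (hD.mk_mem_depEdges_of_mem_uIoo hf hab.symm hac hbc ha)
  · refine h₁ (hD.mk_mem_depEdges_of_mem_uIoo hf hac hbc.symm hab ?_)
    simp only [Set.uIoo, Set.mem_Ioo] at hb ha ⊢
    omega

end GraphOrientation

open GraphOrientation

namespace cycleSq

variable {n : ℕ}

theorem adj_of_sub_eq_one (hn : 1 < n) {u v : ZMod n} (h : v - u = 1) : (cycleSq n).Adj u v :=
  ⟨fun huv => ZMod.natCast_ne_zero_of_lt one_ne_zero hn (by simpa [huv] using h.symm),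
    Or.inr (Or.inl h)⟩

theorem adj_of_sub_eq_two (hn : 2 < n) {u v : ZMod n} (h : v - u = 2) : (cycleSq n).Adj u v :=
  ⟨fun huv => ZMod.natCast_ne_zero_of_lt two_ne_zero hn (by simpa [huv] using h.symm),
    Or.inr (Or.inr (Or.inr h))⟩

def shortEdge (i : ZMod n) : Sym2 (ZMod n) := s(i, i + 1)

def longEdge (i : ZMod n) : Sym2 (ZMod n) := s(i, i + 2)

theorem shortEdge_add_one (i : ZMod n) : shortEdge (i + 1) = s(i + 1, i + 2) := by
  rw [shortEdge, add_assoc, one_add_one_eq_two]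

theorem shortEdge_injective (hn : 2 < n) : Function.Injective (shortEdge (n := n)) := by
  intro i j h
  rcases Sym2.eq_iff.mp h with ⟨h₁, -⟩ | ⟨h₁, h₂⟩
  · exact h₁
  · exact absurd (by linear_combination h₂ - h₁) (ZMod.natCast_ne_zero_of_lt two_ne_zero hn)

theorem longEdge_injective (hn : 4 < n) : Function.Injective (longEdge (n := n)) := by
  intro i j h
  rcases Sym2.eq_iff.mp h with ⟨h₁, -⟩ | ⟨h₁, h₂⟩
  · exact h₁
  · exact absurd (by linear_combination h₂ - h₁)
      (ZMod.natCast_ne_zero_of_lt (k := 4) (by norm_num) hn)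

theorem shortEdge_ne_longEdge (hn : 3 < n) (i j : ZMod n) : shortEdge i ≠ longEdge j := by
  intro h
  rcases Sym2.eq_iff.mp h with ⟨h₁, h₂⟩ | ⟨h₁, h₂⟩
  · exact ZMod.natCast_ne_zero_of_lt (n := n) (k := 1) one_ne_zero (by omega)
      (by linear_combination h₁ - h₂)
  · exact ZMod.natCast_ne_zero_of_lt (k := 3) (by norm_num) hn (by linear_combination h₂ - h₁)

open Classical in
/-- Short edges lie in two of the triangles `{i, i + 1, i + 2}`, long edges in one; counting long
edges twice makes the weights sum to twice the number of edges of `S`. -/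
noncomputable def triangleWeight (S : Set (Sym2 (ZMod n))) (i : ZMod n) : ℕ :=
  (if shortEdge i ∈ S then 1 else 0) + (if shortEdge (i + 1) ∈ S then 1 else 0) +
    2 * if longEdge i ∈ S then 1 else 0

variable {S : Set (Sym2 (ZMod n))} {i : ZMod n}

theorem triangleWeight_eq_one_iff : triangleWeight S i = 1 ↔
    longEdge i ∉ S ∧ (shortEdge i ∈ S ↔ shortEdge (i + 1) ∉ S) := by
  unfold triangleWeight
  split_ifs <;> simp_all

theorem triangleWeight_cases (h : triangleWeight S i ≤ 2) :
    triangleWeight S i = 1 ∨ (shortEdge i ∉ S ∧ shortEdge (i + 1) ∉ S) ∨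
      (shortEdge i ∈ S ∧ shortEdge (i + 1) ∈ S ∧ longEdge i ∉ S) := by
  unfold triangleWeight at h ⊢
  split_ifs at h ⊢ <;> simp_all

open Classical in
theorem sum_triangleWeight_le [NeZero n] (hn : 4 < n) (S : Set (Sym2 (ZMod n))) :
    ∑ i, triangleWeight S i ≤ 2 * S.ncard := by
  set e : ZMod n ⊕ ZMod n → Sym2 (ZMod n) := Sum.elim shortEdge longEdge
  have he : e.Injective := (shortEdge_injective (by omega)).sumElim (longEdge_injective hn)
    (shortEdge_ne_longEdge (by omega))
  have hshift : ∑ i : ZMod n, (if shortEdge (i + 1) ∈ S then 1 else 0) =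
      ∑ i : ZMod n, (if shortEdge i ∈ S then 1 else 0) :=
    Equiv.sum_comp (Equiv.addRight 1) fun i => if shortEdge i ∈ S then 1 else 0
  have hcount :
      ∑ i, (if shortEdge i ∈ S then 1 else 0) + ∑ i, (if longEdge i ∈ S then 1 else 0) ≤
        S.ncard := by
    calc _ = ∑ x, (if e x ∈ S then 1 else 0) := (Fintype.sum_sum_type _).symm
      _ ≤ S.ncard := by
        rw [Finset.sum_boole, Nat.cast_id, ← Set.ncard_coe_finset]
        exact Set.ncard_le_ncard_of_injOn e (by simp) he.injOn
  simp only [triangleWeight, Finset.sum_add_distrib, ← Finset.mul_sum, hshift]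
  omega

section Orientation

variable {D : GraphOrientation (cycleSq n)}

theorem one_le_triangleWeight [NeZero n] (hn : 2 < n) (hD : D.Acyclic) (i : ZMod n) :
    1 ≤ triangleWeight D.depEdges i := by
  obtain ⟨f, hf⟩ := hD.exists_height
  have hcover : shortEdge i ∉ D.depEdges → shortEdge (i + 1) ∉ D.depEdges →
      longEdge i ∈ D.depEdges := fun h₀ h₁ => by
    have hab := adj_of_sub_eq_one (by omega) (add_sub_cancel_left i 1)
    have hbc := adj_of_sub_eq_one (by omega) (by ring : i + 2 - (i + 1) = 1)
    have hac := adj_of_sub_eq_two hn (add_sub_cancel_left i 2)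
    rw [shortEdge_add_one] at h₁
    exact hD.mk_mem_depEdges_of_mem_uIoo hf hab hbc hac
      (hD.mem_uIoo_of_notMem_depEdges hf hab hbc hac h₀ h₁)
  unfold triangleWeight
  split_ifs <;> simp_all

variable {f : ZMod n → ℕ}

theorem mem_uIoo_of_shortEdge_mem (hn : 2 < n) (hD : D.Acyclic)
    (hf : ∀ ⦃u v⦄, D.rel u v → f u < f v) (h : triangleWeight D.depEdges i = 1)
    (hs : shortEdge i ∈ D.depEdges) : f (i + 2) ∈ Set.uIoo (f i) (f (i + 1)) := by
  obtain ⟨hl, hs'⟩ := triangleWeight_eq_one_iff.mp h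
  have h₁ := hs'.mp hs
  rw [shortEdge_add_one, Sym2.eq_swap] at h₁
  exact hD.mem_uIoo_of_notMem_depEdges hf (adj_of_sub_eq_two hn (add_sub_cancel_left i 2))
    (adj_of_sub_eq_one (by omega) (by ring)).symm
    (adj_of_sub_eq_one (by omega) (add_sub_cancel_left i 1)) hl h₁

theorem mem_uIoo_of_shortEdge_add_one_mem (hn : 2 < n) (hD : D.Acyclic)
    (hf : ∀ ⦃u v⦄, D.rel u v → f u < f v) (h : triangleWeight D.depEdges i = 1)
    (hs : shortEdge (i + 1) ∈ D.depEdges) : f i ∈ Set.uIoo (f (i + 1)) (f (i + 2)) := by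
  obtain ⟨hl, hs'⟩ := triangleWeight_eq_one_iff.mp h
  have h₀ : shortEdge i ∉ D.depEdges := fun h₀ => hs'.mp h₀ hs
  rw [shortEdge, Sym2.eq_swap] at h₀
  exact hD.mem_uIoo_of_notMem_depEdges hf
    (adj_of_sub_eq_one (by omega) (add_sub_cancel_left i 1)).symm
    (adj_of_sub_eq_two hn (add_sub_cancel_left i 2)) (adj_of_sub_eq_one (by omega) (by ring))
    h₀ hl

theorem shortEdge_add_two_mem_and_rel [NeZero n] (hn : 2 < n) (hD : D.Acyclic) {x : ZMod n}
    (hs : shortEdge x ∈ D.depEdges) (hrel : D.rel x (x + 1))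
    (h₀ : triangleWeight D.depEdges x = 1) (h₁ : triangleWeight D.depEdges (x + 1) = 1) :
    shortEdge (x + 2) ∈ D.depEdges ∧ D.rel x (x + 2) ∧ D.rel (x + 2) (x + 3) := by
  obtain ⟨f, hf⟩ := hD.exists_height
  have hs₁ := (triangleWeight_eq_one_iff.mp h₀).2.mp hs
  have hs₂ : shortEdge (x + 1 + 1) ∈ D.depEdges :=
    not_not.mp (mt (triangleWeight_eq_one_iff.mp h₁).2.mpr hs₁)
  have hx := hf hrel
  have hx₂ := mem_uIoo_of_shortEdge_mem hn hD hf h₀ hs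
  have hx₁ := mem_uIoo_of_shortEdge_add_one_mem hn hD hf h₁ hs₂
  rw [show x + 1 + 1 = x + 2 by ring] at hx₁ hs₂
  rw [show x + 1 + 2 = x + 3 by ring] at hx₁
  simp only [Set.uIoo, Set.mem_Ioo] at hx₂ hx₁
  exact ⟨hs₂, rel_of_lt hf (adj_of_sub_eq_two hn (add_sub_cancel_left x 2)) (by omega),
    rel_of_lt hf (adj_of_sub_eq_one (by omega) (by ring)) (by omega)⟩

theorem exists_end_of_shortEdge_chain [NeZero n] (hn : 2 < n) (hD : D.Acyclic) {x₀ : ZMod n}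
    (hs : shortEdge x₀ ∈ D.depEdges) (hrel : D.rel x₀ (x₀ + 1)) :
    ∃ x, shortEdge x ∈ D.depEdges ∧ D.rel x (x + 1) ∧ ReflTransGen D.rel x₀ x ∧
      (triangleWeight D.depEdges x ≠ 1 ∨ triangleWeight D.depEdges (x + 1) ≠ 1) := by
  obtain ⟨f, hf⟩ := hD.exists_height
  obtain ⟨x, ⟨hxs, hxrel, hreach⟩, hmax⟩ := Set.exists_max_image
    {x | shortEdge x ∈ D.depEdges ∧ D.rel x (x + 1) ∧ ReflTransGen D.rel x₀ x} f
    (Set.toFinite _) ⟨x₀, hs, hrel, .refl⟩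
  refine ⟨x, hxs, hxrel, hreach, not_and_or.mp fun ⟨h₀, h₁⟩ => ?_⟩
  obtain ⟨hs₂, hx₂, hx₃⟩ := shortEdge_add_two_mem_and_rel hn hD hxs hxrel h₀ h₁
  have := hmax (x + 2) ⟨hs₂, by rw [show x + 2 + 1 = x + 3 by ring]; exact hx₃, hreach.tail hx₂⟩
  exact (hf hx₂).not_ge this

theorem not_forall_triangleWeight_eq_one [NeZero n] (hn : 2 < n) (hD : D.Acyclic) :
    ¬ ∀ i, triangleWeight D.depEdges i = 1 := by
  intro h
  obtain ⟨x, hx⟩ : ∃ x, shortEdge x ∈ D.depEdges := by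
    by_contra! h'
    exact h' 0 ((triangleWeight_eq_one_iff.mp (h 0)).2.mpr (h' _))
  obtain ⟨D', hD', hS, hrel⟩ :=
    hD.exists_reorient (adj_of_sub_eq_one (by omega) (add_sub_cancel_left x 1))
  rw [← hS] at hx h
  obtain ⟨y, -, -, -, hy⟩ := exists_end_of_shortEdge_chain hn hD' hx hrel
  exact hy.elim (· (h y)) (· (h _))

theorem shortEdge_mem_or_shortEdge_add_one_mem [NeZero n] (hn : 3 < n) (hD : D.Acyclic)
    {p : ZMod n} (hw : ∀ i ≠ p, triangleWeight D.depEdges i = 1) :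
    shortEdge p ∈ D.depEdges ∨ shortEdge (p + 1) ∈ D.depEdges := by
  by_contra! ⟨h₀, h₁⟩
  have : Fact (1 < n) := ⟨by omega⟩
  have three_ne : (3 : ZMod n) ≠ 0 := by
    exact_mod_cast ZMod.natCast_ne_zero_of_lt (k := 3) (by norm_num) hn
  have hw₁ := hw (p + 1) fun h => one_ne_zero (by linear_combination h)
  have hs₂ : shortEdge (p + 1 + 1) ∈ D.depEdges :=
    not_not.mp (mt (triangleWeight_eq_one_iff.mp hw₁).2.mpr h₁)
  obtain ⟨D', hD', hS, hrel⟩ :=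
    hD.exists_reorient (adj_of_sub_eq_one (by omega) (add_sub_cancel_left (p + 1 + 1) 1))
  rw [← hS] at hw hw₁ h₀ h₁ hs₂
  obtain ⟨x, hxs, hxrel, hreach, hx⟩ := exists_end_of_shortEdge_chain (by omega) hD' hs₂ hrel
  have hxp : x + 1 = p := by
    refine hx.elim (fun hx => absurd ?_ h₀) (fun hx => not_not.mp (mt (hw _) hx))
    rwa [← not_not.mp (mt (hw x) hx)]
  obtain rfl : x = p - 1 := eq_sub_of_add_eq hxp
  obtain ⟨f, hf⟩ := hD'.exists_height
  have hb₁ := mem_uIoo_of_shortEdge_mem (by omega) hD' hf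
    (hw _ fun h => one_ne_zero (by linear_combination -h)) hxs
  have hb₂ := mem_uIoo_of_shortEdge_add_one_mem (by omega) hD' hf hw₁ hs₂
  rw [show p - 1 + 2 = p + 1 by ring, sub_add_cancel] at hb₁
  rw [sub_add_cancel] at hxrel
  rw [show p + 1 + 2 = p + 1 + 1 + 1 by ring] at hb₂
  have := hf hxrel
  have := hf hrel
  simp only [Set.uIoo, Set.mem_Ioo] at hb₁ hb₂
  have hpath : TransGen D'.rel (p + 1 + 1) (p - 1) :=
    (reflTransGen_iff_eq_or_transGen.mp hreach).resolve_left fun h =>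
      three_ne (by linear_combination -h)
  have hlast : D'.rel (p - 1) (p + 1) :=
    rel_of_lt hf (adj_of_sub_eq_two (by omega) (by ring)) (by omega)
  have hshort : D'.rel (p + 1 + 1) (p + 1) :=
    rel_of_lt hf (adj_of_sub_eq_one (by omega) (by ring)).symm (by omega)
  exact h₁ ⟨_, _, hD'.dep_of_transGen hpath hlast hshort, Sym2.eq_swap⟩

theorem longEdge_mem_of_shortEdge_mem_of_shortEdge_add_one_mem [NeZero n] (hn : 2 < n)
    (hD : D.Acyclic) {p : ZMod n} (hw : ∀ i ≠ p, triangleWeight D.depEdges i = 1)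
    (h₀ : shortEdge p ∈ D.depEdges) (h₁ : shortEdge (p + 1) ∈ D.depEdges) :
    longEdge p ∈ D.depEdges := by
  obtain ⟨D', hD', hS, hrel⟩ :=
    hD.exists_reorient (adj_of_sub_eq_one (by omega) (add_sub_cancel_left (p + 1) 1))
  rw [← hS] at hw h₀ h₁ ⊢
  obtain ⟨x, hxs, hxrel, -, hx⟩ := exists_end_of_shortEdge_chain hn hD' h₁ hrel
  rcases hx with hx | hx
  · obtain rfl := not_not.mp (mt (hw x) hx)
    rw [show x + 1 + 1 = x + 2 by ring] at hrel
    exact hD'.mk_mem_depEdges_of_rel hxrel hrel (adj_of_sub_eq_two hn (add_sub_cancel_left x 2))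
  · have : Fact (1 < n) := ⟨by omega⟩
    have hxp := not_not.mp (mt (hw _) hx)
    have hxw := hw x fun h => one_ne_zero (by linear_combination hxp - h)
    exact absurd h₀ (hxp ▸ (triangleWeight_eq_one_iff.mp hxw).2.mp hxs)

end Orientation

end cycleSq

/-- For `n ≥ 7`, there is no acyclic orientation of `C_n^2` with exactly `⌈n/2⌉`
dependent arcs whose underlying edges, when deleted, leave `C_n^2` triangle-free. -/
theorem stmt17 (n : ℕ) (hn : 7 ≤ n) :
    ¬ ∃ D : GraphOrientation (cycleSq n), D.Acyclic ∧
      D.depArcs.ncard = (n + 1) / 2 ∧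
      ((cycleSq n).deleteEdges
        {e : Sym2 (ZMod n) | ∃ u v, D.Dep u v ∧ e = s(u, v)}).CliqueFree 3 := by
  rintro ⟨D, hD, hcard, -⟩
  have : NeZero n := ⟨by omega⟩
  have hsum : ∑ i, cycleSq.triangleWeight D.depEdges i ≤ Fintype.card (ZMod n) + 1 := by
    have := (cycleSq.sum_triangleWeight_le (by omega) D.depEdges).trans
      (Nat.mul_le_mul_left 2 D.ncard_depEdges_le)
    rw [ZMod.card]
    omega
  obtain ⟨p, hp, hw⟩ :=
    Fintype.exists_forall_ne_eq_one _ (cycleSq.one_le_triangleWeight (by omega) hD) hsum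
  rcases cycleSq.triangleWeight_cases hp with h | ⟨h₀, h₁⟩ | ⟨h₀, h₁, hl⟩
  · exact cycleSq.not_forall_triangleWeight_eq_one (by omega) hD fun i =>
      if hi : i = p then hi ▸ h else hw i hi
  · exact (cycleSq.shortEdge_mem_or_shortEdge_add_one_mem (by omega) hD hw).elim h₀ h₁
  · exact hl <|
      cycleSq.longEdge_mem_of_shortEdge_mem_of_shortEdge_add_one_mem (by omega) hD hw h₀ h₁
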